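/- Let p be an odd prime and let α₀ ∈ ℚ_p be a quadratic irrational with conjugate ᾱ₀. Let (α_n), (b_n) be the sequences produced by Browkin's second algorithm applied to α₀, and assume the expansion is periodic. If ‖α₀‖_p = 1 and ‖ᾱ₀‖_p < 1, then the pre-period of the expansion has even length. -/

import Mathlib

/-- A rational number `a` is a `p`-adic fraction if `a * p^m` is an integer
for some natural number `m`, i.e. `a ∈ ℤ[1/p]`. -/
def IsPadicFrac (p : ℕ) (a : ℚ) : Prop := ∃ (m : ℕ) (z : ℤ), a * (p : ℚ) ^ m = (z : ℚ)

/-- `b` is Browkin's integral floor `s α`: the unique `p`-adic fraction with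
`|b| < p/2` and `‖α - b‖_p < 1`. -/
def IsIntFloor (p : ℕ) [Fact p.Prime] (α : ℚ_[p]) (b : ℚ) : Prop :=
  IsPadicFrac p b ∧ |b| < (p : ℚ) / 2 ∧ ‖α - (b : ℚ_[p])‖ < 1

/-- `b` is Browkin's fractional floor `t α`: the unique `p`-adic fraction with
`|b| < 1/2` and `‖α - b‖_p ≤ 1`. -/
def IsFracFloor (p : ℕ) [Fact p.Prime] (α : ℚ_[p]) (b : ℚ) : Prop :=
  IsPadicFrac p b ∧ |b| < 1 / 2 ∧ ‖α - (b : ℚ_[p])‖ ≤ 1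

/-- Browkin's second algorithm: `b n = s (α n)` for even `n`; for odd `n`,
`b n = t (α n)` if `‖α n - t (α n)‖_p = 1`, and `b n = t (α n) - sign (t (α n))`
if `‖α n - t (α n)‖_p < 1`; and `α (n + 1) = (α n - b n)⁻¹`. -/
def Alg2 (p : ℕ) [Fact p.Prime] (α : ℕ → ℚ_[p]) (b : ℕ → ℚ) : Prop :=
  (∀ n, Even n → IsIntFloor p (α n) (b n)) ∧
  (∀ n, Odd n → ∃ c : ℚ, IsFracFloor p (α n) c ∧
    ((‖α n - (c : ℚ_[p])‖ = 1 ∧ b n = c) ∨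
     (‖α n - (c : ℚ_[p])‖ < 1 ∧
       b n = c - (if 0 < c then 1 else if c < 0 then -1 else 0)))) ∧
  ∀ n, α (n + 1) = (α n - (b n : ℚ_[p]))⁻¹


/-!
Let `σ` be the embedding of `ℚ(α₀)` into `ℚ_p` sending `α₀` to its conjugate. The conjugates
`ᾱₙ = σ αₙ` obey the same recursion `ᾱₙ₊₁ = (ᾱₙ - bₙ)⁻¹`, and induction gives `‖αₙ‖ = 1`,
`‖ᾱₙ‖ < 1` for even `n` and `‖αₙ‖ ≥ p`, `‖ᾱₙ‖ = 1` for odd `n`. Hence `αₙ ↦ αₙ₋₁` contracts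
distances by a factor `p` every two steps, so indices with equal tails of partial quotients carry
equal `αₙ`, hence equal `ᾱₙ`. If the pre-period were `h + 1` with `h` even and `k` a period, then
`ᾱ_{h+2k} - b_{h+2k} = ᾱₕ - bₕ`, so `b_{h+2k} - bₕ` is a `p`-adic fraction of `p`-adic norm `< 1`
and absolute value `< p`; it vanishes, and the expansion is already periodic from `h`.
-/

open Polynomial IntermediateField

section QuadraticConjugate

variable {F E : Type*} [Field F] [Field E] [Algebra F E] {x₀ : E} {r s : F}

theorem minpoly_eq_of_sq_eq (hx₀ : x₀ ∉ (⊥ : IntermediateField F E))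
    (hq : x₀ ^ 2 = algebraMap F E r * x₀ + algebraMap F E s) :
    minpoly F x₀ = X ^ 2 - C r * X - C s := by
  have hmonic : (X ^ 2 - C r * X - C s : F[X]).Monic := by monicity!
  have hroot : aeval x₀ (X ^ 2 - C r * X - C s : F[X]) = 0 := by
    simp only [map_sub, map_mul, aeval_X_pow, aeval_C, aeval_X]
    linear_combination hq
  have hint : IsIntegral F x₀ := ⟨_, hmonic, hroot⟩
  refine (eq_of_monic_of_dvd_of_natDegree_le (minpoly.monic hint) hmonic
    (minpoly.dvd F x₀ hroot) ?_).symm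
  have hdeg : 2 ≤ (minpoly F x₀).natDegree :=
    (minpoly.two_le_natDegree_iff hint).2 (mem_bot.not.1 hx₀)
  have h2 : (X ^ 2 - C r * X - C s : F[X]).natDegree = 2 := by compute_degree!
  omega

theorem exists_algHom_adjoin_gen_eq_conj (hx₀ : x₀ ∉ (⊥ : IntermediateField F E))
    (hq : x₀ ^ 2 = algebraMap F E r * x₀ + algebraMap F E s) :
    ∃ σ : F⟮x₀⟯ →ₐ[F] E, σ (AdjoinSimple.gen F x₀) = algebraMap F E r - x₀ := by
  have hmin := minpoly_eq_of_sq_eq hx₀ hq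
  have hne : minpoly F x₀ ≠ 0 := hmin ▸ Monic.ne_zero (by monicity!)
  have hroot : algebraMap F E r - x₀ ∈ (minpoly F x₀).aroots E := by
    rw [mem_aroots, hmin]
    refine ⟨hmin ▸ hne, ?_⟩
    simp only [map_sub, map_mul, aeval_X_pow, aeval_C, aeval_X]
    linear_combination hq
  exact ⟨_, algHomAdjoinIntegralEquiv_symm_apply_gen F (minpoly.ne_zero_iff.1 hne) ⟨_, hroot⟩⟩

theorem forall_notMem_bot_of_eq_inv_sub {x : ℕ → E} {b : ℕ → F}
    (hx : ∀ n, x (n + 1) = (x n - algebraMap F E (b n))⁻¹)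
    (hx₀ : x 0 ∉ (⊥ : IntermediateField F E)) (n : ℕ) : x n ∉ (⊥ : IntermediateField F E) := by
  induction n with
  | zero => exact hx₀
  | succ n ih =>
    intro h
    refine ih ?_
    have : x n - algebraMap F E (b n) ∈ (⊥ : IntermediateField F E) := by
      simpa only [hx n, inv_inv] using inv_mem h
    simpa only [sub_add_cancel] using add_mem this (IntermediateField.algebraMap_mem ⊥ (b n))

theorem exists_conj_of_eq_inv_sub {x : ℕ → E} {b : ℕ → F}
    (hx : ∀ n, x (n + 1) = (x n - algebraMap F E (b n))⁻¹)
    (hx₀ : x 0 ∉ (⊥ : IntermediateField F E))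
    (hq : x 0 ^ 2 = algebraMap F E r * x 0 + algebraMap F E s) :
    ∃ c : ℕ → E, c 0 = algebraMap F E r - x 0 ∧
      (∀ n, c (n + 1) = (c n - algebraMap F E (b n))⁻¹) ∧ ∀ m n, x m = x n → c m = c n := by
  obtain ⟨σ, hσ⟩ := exists_algHom_adjoin_gen_eq_conj hx₀ hq
  have hmem : ∀ n, x n ∈ F⟮x 0⟯ := by
    intro n
    induction n with
    | zero => exact mem_adjoin_simple_self F (x 0)
    | succ n ih =>
      rw [hx n]; exact inv_mem (sub_mem ih (IntermediateField.algebraMap_mem _ _))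
  refine ⟨fun n ↦ σ ⟨x n, hmem n⟩, hσ, fun n ↦ ?_, fun m n h ↦ by simp only [h]⟩
  have : (⟨x (n + 1), hmem (n + 1)⟩ : F⟮x 0⟯) =
      (⟨x n, hmem n⟩ - algebraMap F F⟮x 0⟯ (b n))⁻¹ := Subtype.ext (hx n)
  simp only [this, map_inv₀, map_sub, AlgHom.commutes]

theorem notMem_bot_of_forall_ne_ratCast {K : Type*} [Field K] [CharZero K] {x : K}
    (h : ∀ q : ℚ, x ≠ q) : x ∉ (⊥ : IntermediateField ℚ K) := fun hx ↦ by
  obtain ⟨q, hq⟩ := mem_bot.1 hx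
  exact h q (by rw [← hq, eq_ratCast])

end QuadraticConjugate

theorem nonpos_of_forall_le_of_mul_le_succ {d : ℕ → ℝ} {B C : ℝ} (hC : 1 < C)
    (hB : ∀ n, d n ≤ B) (hd : ∀ n, C * d n ≤ d (n + 1)) : d 0 ≤ 0 := by
  have hgrow : ∀ n, C ^ n * d 0 ≤ d n := by
    intro n
    induction n with
    | zero => simp
    | succ n ih =>
      calc C ^ (n + 1) * d 0 = C * (C ^ n * d 0) := by ring
        _ ≤ C * d n := by gcongr
        _ ≤ d (n + 1) := hd n
  by_contra! hpos
  obtain ⟨n, hn⟩ := pow_unbounded_of_one_lt (B / d 0) hC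
  have := (div_lt_iff₀ hpos).1 hn
  linarith [hgrow n, hB n]

theorem eq_of_forall_sub_eq_inv_sub_inv {K : Type*} [NormedField K] {x y : ℕ → K} {C : ℝ}
    (hC : 1 < C) (hx : ∀ n, 1 ≤ ‖x n‖) (hy : ∀ n, 1 ≤ ‖y n‖)
    (hxC : ∀ n, C ≤ ‖x n‖ * ‖x (n + 1)‖)
    (hxy : ∀ n, x n - y n = (x (n + 1))⁻¹ - (y (n + 1))⁻¹) : x 0 = y 0 := by
  have hx0 : ∀ n, x n ≠ 0 := fun n ↦ norm_pos_iff.1 (one_pos.trans_le (hx n))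
  have hy0 : ∀ n, y n ≠ 0 := fun n ↦ norm_pos_iff.1 (one_pos.trans_le (hy n))
  have hinv : ∀ n, ‖(x n)⁻¹‖ ≤ 1 ∧ ‖(y n)⁻¹‖ ≤ 1 := fun n ↦
    ⟨by rw [norm_inv]; exact inv_le_one_of_one_le₀ (hx n),
      by rw [norm_inv]; exact inv_le_one_of_one_le₀ (hy n)⟩
  set δ : ℕ → ℝ := fun n ↦ ‖x n - y n‖ with hδ
  have hstep : ∀ n, δ n * ‖x (n + 1)‖ ≤ δ (n + 1) := by
    intro n
    have : δ n * ‖x (n + 1)‖ = δ (n + 1) * ‖(y (n + 1))⁻¹‖ := by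
      simp only [hδ, hxy n, inv_sub_inv' (hx0 _) (hy0 _), norm_mul, norm_inv,
        norm_sub_rev (y _)]
      field_simp [norm_ne_zero_iff.2 (hx0 (n + 1))]
    rw [this]
    exact mul_le_of_le_one_right (norm_nonneg _) (hinv _).2
  have hbdd : ∀ n, δ n ≤ 2 := fun n ↦ by
    simp only [hδ, hxy n]
    linarith [norm_sub_le (x (n + 1))⁻¹ (y (n + 1))⁻¹, hinv (n + 1)]
  have hδ0 : δ 0 ≤ 0 := by
    refine nonpos_of_forall_le_of_mul_le_succ (d := fun j ↦ δ (2 * j)) hC (fun j ↦ hbdd _)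
      fun j ↦ ?_
    calc C * δ (2 * j) ≤ ‖x (2 * j + 1)‖ * ‖x (2 * j + 1 + 1)‖ * δ (2 * j) :=
          mul_le_mul_of_nonneg_right (hxC _) (norm_nonneg _)
      _ = δ (2 * j) * ‖x (2 * j + 1)‖ * ‖x (2 * j + 1 + 1)‖ := by ring
      _ ≤ δ (2 * j + 1) * ‖x (2 * j + 1 + 1)‖ := by gcongr; exact hstep _
      _ ≤ δ (2 * (j + 1)) := hstep _
  exact sub_eq_zero.1 (norm_le_zero_iff.1 hδ0)

section Ultrametric

variable {S : Type*} [SeminormedAddGroup S] [IsUltrametricDist S] {x y : S}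

theorem norm_sub_eq_left_of_norm_lt (h : ‖y‖ < ‖x‖) : ‖x - y‖ = ‖x‖ := by
  have hne : ‖x‖ ≠ ‖-y‖ := by rw [norm_neg]; exact h.ne'
  rw [sub_eq_add_neg, IsUltrametricDist.norm_add_eq_max_of_norm_ne_norm hne, norm_neg,
    max_eq_left h.le]

theorem norm_sub_eq_right_of_norm_lt (h : ‖x‖ < ‖y‖) : ‖x - y‖ = ‖y‖ := by
  rw [norm_sub_rev, norm_sub_eq_left_of_norm_lt h]

end Ultrametric

namespace IsPadicFrac

theorem sub {p : ℕ} {a b : ℚ} (ha : IsPadicFrac p a) (hb : IsPadicFrac p b) :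
    IsPadicFrac p (a - b) := by
  obtain ⟨m, z, hz⟩ := ha
  obtain ⟨n, w, hw⟩ := hb
  refine ⟨m + n, z * p ^ n - w * p ^ m, ?_⟩
  push_cast
  linear_combination (p : ℚ) ^ n * hz - (p : ℚ) ^ m * hw

variable {p : ℕ} [Fact p.Prime] {a : ℚ}

theorem exists_intCast_eq_of_norm_le_one (ha : IsPadicFrac p a) (h : ‖(a : ℚ_[p])‖ ≤ 1) :
    ∃ z : ℤ, a = z := by
  obtain ⟨m, z, hz⟩ := ha
  induction m generalizing z with
  | zero => exact ⟨z, by simpa using hz⟩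
  | succ m ih =>
    have hlt : ‖((z : ℤ) : ℚ_[p])‖ < 1 := by
      have hp : ‖(p : ℚ_[p])‖ < 1 := by
        rw [Padic.norm_p]
        exact inv_lt_one_of_one_lt₀ (by exact_mod_cast (Fact.out : p.Prime).one_lt)
      have : ((z : ℤ) : ℚ_[p]) = (a : ℚ_[p]) * (p : ℚ_[p]) ^ (m + 1) := by
        exact_mod_cast hz.symm
      rw [this, norm_mul, norm_pow]
      calc ‖(a : ℚ_[p])‖ * ‖(p : ℚ_[p])‖ ^ (m + 1) ≤ 1 * ‖(p : ℚ_[p])‖ ^ (m + 1) := by gcongr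
        _ < 1 := by rw [one_mul]; exact pow_lt_one₀ (norm_nonneg _) hp (by omega)
    obtain ⟨w, rfl⟩ := Padic.norm_intCast_lt_one_iff.1 hlt
    refine ih w ?_
    have hp0 : (p : ℚ) ≠ 0 := by exact_mod_cast (Fact.out : p.Prime).ne_zero
    apply mul_right_cancel₀ hp0
    rw [mul_assoc, ← pow_succ, hz]; push_cast; ring

theorem eq_zero_of_norm_lt_one_of_abs_lt (ha : IsPadicFrac p a) (h : ‖(a : ℚ_[p])‖ < 1)
    (habs : |a| < p) : a = 0 := by
  obtain ⟨z, rfl⟩ := ha.exists_intCast_eq_of_norm_le_one h.le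
  have hdvd : (p : ℤ) ∣ z := Padic.norm_intCast_lt_one_iff.1 (by exact_mod_cast h)
  exact_mod_cast Int.eq_zero_of_abs_lt_dvd hdvd (by exact_mod_cast habs)

end IsPadicFrac

def IsPeriodicFrom {β : Type*} (b : ℕ → β) (h : ℕ) : Prop :=
  ∃ k, 1 ≤ k ∧ ∀ n, h ≤ n → b (n + k) = b n

section Browkin

variable {p : ℕ} [Fact p.Prime] {α c : ℕ → ℚ_[p]} {b : ℕ → ℚ}

theorem Alg2.norm_succ_of_even (halg : Alg2 p α b) (hc : ∀ n, c (n + 1) = (c n - b n)⁻¹)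
    {n : ℕ} (hn : Even n) (hαb : α n ≠ b n) (hα : ‖α n‖ = 1) (hcn : ‖c n‖ < 1) :
    p ≤ ‖α (n + 1)‖ ∧ ‖c (n + 1)‖ = 1 := by
  have hsub : ‖α n - b n‖ < 1 := (halg.1 n hn).2.2
  have hb : ‖(b n : ℚ_[p])‖ = 1 := by
    rw [← sub_sub_cancel (α n) (b n : ℚ_[p]), norm_sub_eq_left_of_norm_lt (hα ▸ hsub), hα]
  refine ⟨?_, by rw [hc, norm_inv, norm_sub_eq_right_of_norm_lt (hb ▸ hcn), hb, inv_one]⟩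
  have hle : ‖α n - b n‖ ≤ (p : ℝ)⁻¹ := by
    simpa using (Padic.norm_le_pow_iff_norm_lt_pow_add_one (α n - (b n : ℚ_[p])) (-1)).2
      (by simpa using hsub)
  rw [halg.2.2, norm_inv]
  exact le_inv_of_le_inv₀ (norm_pos_iff.2 (sub_ne_zero.2 hαb)) hle

theorem Alg2.norm_sub_and_norm_of_odd (halg : Alg2 p α b) {n : ℕ} (hn : Odd n)
    (hα : 1 < ‖α n‖) : ‖α n - b n‖ = 1 ∧ ‖(b n : ℚ_[p])‖ = ‖α n‖ := by
  obtain ⟨t, ⟨-, -, hαt⟩, hcases⟩ := halg.2.1 n hn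
  have ht : ‖(t : ℚ_[p])‖ = ‖α n‖ := by
    rw [← sub_sub_cancel (α n) (t : ℚ_[p]), norm_sub_eq_left_of_norm_lt (hαt.trans_lt hα)]
  rcases hcases with ⟨h1, hbt⟩ | ⟨hlt, hbt⟩
  · rw [hbt]; exact ⟨h1, ht⟩
  set e : ℚ := if 0 < t then 1 else if t < 0 then -1 else 0
  have he : ‖(e : ℚ_[p])‖ = 1 := by
    have ht0 : t ≠ 0 := by rintro rfl; simp only [Rat.cast_zero, norm_zero] at ht; linarith
    rcases ht0.lt_or_gt with h | h
    · simp [e, h, h.not_gt]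
    · simp [e, h]
  have hb : (b n : ℚ_[p]) = t - e := by rw [hbt]; push_cast; rfl
  constructor
  · rw [hb, show α n - (t - e) = (e : ℚ_[p]) - (t - α n) by ring,
      norm_sub_eq_left_of_norm_lt (by rw [he, norm_sub_rev]; exact hlt), he]
  · rw [hb, norm_sub_eq_left_of_norm_lt (by rw [he, ht]; exact hα), ht]

theorem Alg2.norm_succ_of_odd (halg : Alg2 p α b) (hc : ∀ n, c (n + 1) = (c n - b n)⁻¹)
    {n : ℕ} (hn : Odd n) (hα : p ≤ ‖α n‖) (hcn : ‖c n‖ = 1) :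
    ‖α (n + 1)‖ = 1 ∧ ‖c (n + 1)‖ < 1 := by
  have hα1 : 1 < ‖α n‖ := lt_of_lt_of_le (by exact_mod_cast (Fact.out : p.Prime).one_lt) hα
  obtain ⟨hsub, hb⟩ := halg.norm_sub_and_norm_of_odd hn hα1
  refine ⟨by rw [halg.2.2, norm_inv, hsub, inv_one], ?_⟩
  rw [hc, norm_inv, norm_sub_eq_right_of_norm_lt (by rw [hb, hcn]; exact hα1), hb]
  exact inv_lt_one_of_one_lt₀ hα1

theorem Alg2.norm_invariant (halg : Alg2 p α b) (hc : ∀ n, c (n + 1) = (c n - b n)⁻¹)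
    (hαb : ∀ n, α n ≠ b n) (hα0 : ‖α 0‖ = 1) (hc0 : ‖c 0‖ < 1) (j : ℕ) :
    (‖α (2 * j)‖ = 1 ∧ ‖c (2 * j)‖ < 1) ∧ (p ≤ ‖α (2 * j + 1)‖ ∧ ‖c (2 * j + 1)‖ = 1) := by
  induction j with
  | zero => exact ⟨⟨hα0, hc0⟩, halg.norm_succ_of_even hc Even.zero (hαb 0) hα0 hc0⟩
  | succ j ih =>
    have heven := halg.norm_succ_of_odd hc (odd_two_mul_add_one j) ih.2.1 ih.2.2
    rw [mul_add_one]
    exact ⟨heven, halg.norm_succ_of_even hc (even_two_mul (j + 1)) (hαb _) heven.1 heven.2⟩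

theorem Alg2.norm_bounds (halg : Alg2 p α b) (hc : ∀ n, c (n + 1) = (c n - b n)⁻¹)
    (hαb : ∀ n, α n ≠ b n) (hα0 : ‖α 0‖ = 1) (hc0 : ‖c 0‖ < 1) :
    (∀ n, 1 ≤ ‖α n‖) ∧ (∀ n, p ≤ ‖α n‖ * ‖α (n + 1)‖) ∧ ∀ n, Even n → ‖c n‖ < 1 := by
  have hnorm := halg.norm_invariant hc hαb hα0 hc0
  have hp : (1 : ℝ) ≤ p := by exact_mod_cast (Fact.out : p.Prime).one_lt.le
  have hα1 : ∀ n, 1 ≤ ‖α n‖ := fun n ↦ by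
    obtain ⟨j, rfl | rfl⟩ := Nat.even_or_odd' n
    · exact (hnorm j).1.1.ge
    · exact hp.trans (hnorm j).2.1
  refine ⟨hα1, fun n ↦ ?_, fun n ⟨j, hj⟩ ↦ by rw [hj, ← two_mul]; exact (hnorm j).1.2⟩
  obtain ⟨j, rfl | rfl⟩ := Nat.even_or_odd' n
  · rw [(hnorm j).1.1, one_mul]; exact (hnorm j).2.1
  · rw [show 2 * j + 1 + 1 = 2 * (j + 1) by ring, (hnorm (j + 1)).1.1, mul_one]
    exact (hnorm j).2.1

theorem Alg2.succ_eq_inv_sub_algebraMap (halg : Alg2 p α b) (n : ℕ) :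
    α (n + 1) = (α n - algebraMap ℚ ℚ_[p] (b n))⁻¹ := by
  rw [eq_ratCast]; exact halg.2.2 n

theorem Alg2.ne_ratCast (halg : Alg2 p α b) (hirr : ∀ q : ℚ, α 0 ≠ q) (n : ℕ) (q : ℚ) :
    α n ≠ q := fun h ↦
  forall_notMem_bot_of_eq_inv_sub halg.succ_eq_inv_sub_algebraMap
    (notMem_bot_of_forall_ne_ratCast hirr) n (h ▸ mem_bot.2 ⟨q, eq_ratCast _ q⟩)

theorem Alg2.exists_conj (halg : Alg2 p α b) (hirr : ∀ q : ℚ, α 0 ≠ q) {r s : ℚ}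
    (hquad : α 0 ^ 2 = r * α 0 + s) :
    ∃ c : ℕ → ℚ_[p], c 0 = r - α 0 ∧ (∀ n, c (n + 1) = (c n - b n)⁻¹) ∧
      ∀ m n, α m = α n → c m = c n := by
  obtain ⟨c, hc0, hc, hconj⟩ := exists_conj_of_eq_inv_sub halg.succ_eq_inv_sub_algebraMap
    (notMem_bot_of_forall_ne_ratCast hirr) (r := r) (s := s)
    (by simpa only [eq_ratCast] using hquad)
  simp only [eq_ratCast] at hc0 hc
  exact ⟨c, hc0, hc, hconj⟩

theorem Alg2.eq_of_forall_add_eq (halg : Alg2 p α b) (hα1 : ∀ n, 1 ≤ ‖α n‖)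
    (hαp : ∀ n, p ≤ ‖α n‖ * ‖α (n + 1)‖) {i j : ℕ} (hb : ∀ m, b (i + m) = b (j + m)) :
    α i = α j := by
  have hinv : ∀ n, (α (n + 1))⁻¹ = α n - b n := fun n ↦ by rw [halg.2.2, inv_inv]
  exact eq_of_forall_sub_eq_inv_sub_inv (x := fun m ↦ α (i + m)) (y := fun m ↦ α (j + m))
    (by exact_mod_cast (Fact.out : p.Prime).one_lt) (fun m ↦ hα1 _) (fun m ↦ hα1 _)
    (fun m ↦ hαp _) fun m ↦ by simp only [← add_assoc, hinv, hb]; ring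

theorem Alg2.isPeriodicFrom_of_succ (halg : Alg2 p α b) (hc : ∀ n, c (n + 1) = (c n - b n)⁻¹)
    (hconj : ∀ m n, α m = α n → c m = c n) (hα1 : ∀ n, 1 ≤ ‖α n‖)
    (hαp : ∀ n, p ≤ ‖α n‖ * ‖α (n + 1)‖) (hc1 : ∀ n, Even n → ‖c n‖ < 1) {n : ℕ} (hn : Even n)
    (h : IsPeriodicFrom b (n + 1)) : IsPeriodicFrom b n := by
  obtain ⟨k, hk, hper⟩ := h
  have hper2 : ∀ m, n + 1 ≤ m → b (m + 2 * k) = b m := fun m hm ↦ by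
    rw [two_mul, ← add_assoc, hper _ (by omega), hper _ hm]
  have hα : α (n + 2 * k + 1) = α (n + 1) :=
    halg.eq_of_forall_add_eq hα1 hαp fun m ↦ by
      rw [show n + 2 * k + 1 + m = n + 1 + m + 2 * k by ring]; exact hper2 _ (by omega)
  have hsub : c (n + 2 * k) - b (n + 2 * k) = c n - b n :=
    inv_injective (by rw [← hc, ← hc, hconj _ _ hα])
  have hn' : Even (n + 2 * k) := hn.add (even_two_mul k)
  have hbeq : b (n + 2 * k) = b n := by
    refine sub_eq_zero.1 <|
      ((halg.1 _ hn').1.sub (halg.1 n hn).1).eq_zero_of_norm_lt_one_of_abs_lt ?_ ?_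
    · have hd : ((b (n + 2 * k) - b n : ℚ) : ℚ_[p]) = c (n + 2 * k) + -c n := by
        push_cast; linear_combination -hsub
      rw [hd]
      refine (IsUltrametricDist.norm_add_le_max _ _).trans_lt (max_lt (hc1 _ hn') ?_)
      rw [norm_neg]; exact hc1 n hn
    · linarith [abs_sub (b (n + 2 * k)) (b n), (halg.1 _ hn').2.1, (halg.1 n hn).2.1]
  refine ⟨2 * k, by omega, fun m hm ↦ ?_⟩
  rcases hm.eq_or_lt with rfl | hlt
  · exact hbeq
  · exact hper2 m hlt

end Browkin

theorem stmt_15_general (p : ℕ) [Fact p.Prime]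
    (α₀ : ℚ_[p]) (hirr : ∀ q : ℚ, α₀ ≠ (q : ℚ_[p]))
    (r s : ℚ) (hquad : α₀ ^ 2 = (r : ℚ_[p]) * α₀ + (s : ℚ_[p]))
    (α : ℕ → ℚ_[p]) (b : ℕ → ℚ) (h0 : α 0 = α₀) (halg : Alg2 p α b)
    (hper : ∃ h k : ℕ, 1 ≤ k ∧ ∀ n, h ≤ n → b (n + k) = b n)
    (hn1 : ‖α₀‖ = 1) (hn2 : ‖(r : ℚ_[p]) - α₀‖ < 1) :
    Even (sInf {h : ℕ | ∃ k : ℕ, 1 ≤ k ∧ ∀ n, h ≤ n → b (n + k) = b n}) := by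
  subst h0
  obtain ⟨c, hc0, hc, hconj⟩ := halg.exists_conj hirr hquad
  obtain ⟨hα1, hαp, hc1⟩ :=
    halg.norm_bounds hc (fun n ↦ halg.ne_ratCast hirr n (b n)) hn1 (hc0 ▸ hn2)
  change Even (sInf {h | IsPeriodicFrom b h})
  set S := {h | IsPeriodicFrom b h}
  rcases Nat.even_or_odd (sInf S) with heven | ⟨n, hn⟩
  · exact heven
  have hS : S.Nonempty := hper
  have hnS : n + n ∈ S := by
    rw [← two_mul]
    exact halg.isPeriodicFrom_of_succ hc hconj hα1 hαp hc1 (even_two_mul n) (hn ▸ Nat.sInf_mem hS)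
  have := Nat.sInf_le hnS
  omega

/-- For `α₀` a quadratic irrational (with `α₀² = r·α₀ + s`, conjugate `r - α₀`)
whose Browkin II expansion is periodic: if `‖α₀‖_p = 1` and `‖ᾱ₀‖_p < 1`, then
the pre-period (the least `h` admitting a period `k ≥ 1` valid from index `h`
on) has even length. -/
theorem stmt_15 (p : ℕ) [Fact p.Prime] (hp : p ≠ 2)
    (α₀ : ℚ_[p]) (hirr : ∀ q : ℚ, α₀ ≠ (q : ℚ_[p]))
    (r s : ℚ) (hquad : α₀ ^ 2 = (r : ℚ_[p]) * α₀ + (s : ℚ_[p]))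
    (α : ℕ → ℚ_[p]) (b : ℕ → ℚ) (h0 : α 0 = α₀) (halg : Alg2 p α b)
    (hper : ∃ h k : ℕ, 1 ≤ k ∧ ∀ n, h ≤ n → b (n + k) = b n)
    (hn1 : ‖α₀‖ = 1) (hn2 : ‖(r : ℚ_[p]) - α₀‖ < 1) :
    Even (sInf {h : ℕ | ∃ k : ℕ, 1 ≤ k ∧ ∀ n, h ≤ n → b (n + k) = b n}) :=
  stmt_15_general p α₀ hirr r s hquad α b h0 halg hper hn1 hn2
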